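/- The quartic polynomial h_{12} = x_0^4 + x_1^4 + x_2^4 + x_3^4 + 12 x_0x_1x_2x_3 ∈ ℂ[x_0,x_1,x_2,x_3] is nonsingular: the only common zero in ℂ^4 of its four partial derivatives is the origin. -/
import Mathlib


open MvPolynomial

/-- The Burnside quartic form `h₁₂ = x₀⁴ + x₁⁴ + x₂⁴ + x₃⁴ + 12·x₀x₁x₂x₃`. -/
noncomputable def h12 : MvPolynomial (Fin 4) ℂ :=
  X 0 ^ 4 + X 1 ^ 4 + X 2 ^ 4 + X 3 ^ 4 + 12 * (X 0 * X 1 * X 2 * X 3)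

lemma pd12 (i : Fin 4) : MvPolynomial.pderiv i (12 : MvPolynomial (Fin 4) ℂ) = 0 := by
  have : (12 : MvPolynomial (Fin 4) ℂ) = C 12 := by simp [map_ofNat]
  rw [this, pderiv_C]

theorem stmt10 :
    ∀ z : Fin 4 → ℂ,
      (∀ i, MvPolynomial.eval z (MvPolynomial.pderiv i h12) = 0) → z = 0 := by
  intro z h
  have h0 := h 0; have h1 := h 1; have h2 := h 2; have h3 := h 3
  simp [h12, pderiv_X, Pi.single_apply, pd12] at h0 h1 h2 h3
  set a := z 0; set b := z 1; set c := z 2; set d := z 3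
  set P := a * b * c * d with hPdef
  have ea : a ^ 4 = -3 * P := by linear_combination (a / 4) * h0
  have eb : b ^ 4 = -3 * P := by linear_combination (b / 4) * h1
  have ec : c ^ 4 = -3 * P := by linear_combination (c / 4) * h2
  have ed : d ^ 4 = -3 * P := by linear_combination (d / 4) * h3
  have hP4 : P ^ 4 = 0 := by
    linear_combination (-(1/80) * b^4 * c^4 * d^4) * ea + (-(1/80) * (-3*P) * c^4 * d^4) * eb
      + (-(1/80) * 9 * P^2 * d^4) * ec + (-(1/80) * (-27) * P^3) * ed
  have hP : P = 0 := by
    exact pow_eq_zero_iff (by norm_num) |>.mp hP4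
  have ha : a = 0 := by
    have : a ^ 4 = 0 := by rw [ea, hP]; ring
    exact pow_eq_zero_iff (by norm_num) |>.mp this
  have hb : b = 0 := by
    have : b ^ 4 = 0 := by rw [eb, hP]; ring
    exact pow_eq_zero_iff (by norm_num) |>.mp this
  have hc : c = 0 := by
    have : c ^ 4 = 0 := by rw [ec, hP]; ring
    exact pow_eq_zero_iff (by norm_num) |>.mp this
  have hd : d = 0 := by
    have : d ^ 4 = 0 := by rw [ed, hP]; ring
    exact pow_eq_zero_iff (by norm_num) |>.mp this
  funext i
  fin_cases i <;> simpa using (by assumption : _)
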